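/- Let d = 2, γ > 2, s ∈ [0, γ]. There exists C = C(γ, s) such that for all mean-zero u ∈ H^{γ+2}(𝕋²;ℝ²) and all mean-zero f ∈ H^s(𝕋²), ‖Λ^{s−2}((Δu·∇)f)‖_{L²} ≤ C ‖u‖_{H^{γ+2}} ‖f‖_{H^s}. -/

import Mathlib

open scoped BigOperators

/-- Euclidean norm `|k|` of a frequency `k ∈ ℤ²`. -/
noncomputable def freqNorm (k : Fin 2 → ℤ) : ℝ :=
  Real.sqrt (∑ i, ((k i : ℝ)) ^ 2)

/-- Homogeneous Sobolev norm of a mean-zero scalar on `𝕋²` via Fourier coefficients. -/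
noncomputable def hsNorm (s : ℝ) (f : (Fin 2 → ℤ) →₀ ℂ) : ℝ :=
  Real.sqrt (∑ k ∈ f.support, freqNorm k ^ (2 * s) * ‖f k‖ ^ 2)

/-- Homogeneous Sobolev norm of a vector field on `𝕋²` via Fourier coefficients. -/
noncomputable def hsNormVec (s : ℝ) (u : (Fin 2 → ℤ) →₀ (Fin 2 → ℂ)) : ℝ :=
  Real.sqrt (∑ k ∈ u.support, freqNorm k ^ (2 * s) * ∑ i, ‖u k i‖ ^ 2)

/-- Fourier coefficient at `k` of `Λ^{s−2}((Δu·∇)f)`: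
`i |k|^{s−2} Σ_ℓ |ℓ|² f̂(k−ℓ) ((k−ℓ)·û(ℓ))`. -/
noncomputable def opCoef' (s : ℝ) (u : (Fin 2 → ℤ) →₀ (Fin 2 → ℂ))
    (f : (Fin 2 → ℤ) →₀ ℂ) (k : Fin 2 → ℤ) : ℂ :=
  Complex.I * ((freqNorm k ^ (s - 2) : ℝ) : ℂ) * ∑ ℓ ∈ u.support,
    ((freqNorm ℓ ^ (2 : ℝ) : ℝ) : ℂ) * f (k - ℓ) *
      ∑ j, ((k j - ℓ j : ℤ) : ℂ) * u ℓ j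

namespace Stmt8Aux

lemma freqNorm_nonneg (k : Fin 2 → ℤ) : 0 ≤ freqNorm k := Real.sqrt_nonneg _

lemma freqNorm_eq_norm (k : Fin 2 → ℤ) :
    freqNorm k = ‖(WithLp.equiv 2 (Fin 2 → ℝ)).symm (fun i => (k i : ℝ))‖ := by
  rw [EuclideanSpace.norm_eq]
  simp [freqNorm, sq_abs]

lemma freqNorm_add_le (a b : Fin 2 → ℤ) : freqNorm (a + b) ≤ freqNorm a + freqNorm b := by
  rw [freqNorm_eq_norm, freqNorm_eq_norm, freqNorm_eq_norm]
  have : (WithLp.equiv 2 (Fin 2 → ℝ)).symm (fun i => ((a + b) i : ℝ)) =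
      (WithLp.equiv 2 (Fin 2 → ℝ)).symm (fun i => (a i : ℝ)) +
      (WithLp.equiv 2 (Fin 2 → ℝ)).symm (fun i => (b i : ℝ)) := by
    ext i; simp
  rw [this]
  exact norm_add_le _ _

lemma freqNorm_neg (a : Fin 2 → ℤ) : freqNorm (-a) = freqNorm a := by
  simp [freqNorm]

lemma one_le_freqNorm {k : Fin 2 → ℤ} (hk : k ≠ 0) : 1 ≤ freqNorm k := by
  obtain ⟨i, hi⟩ : ∃ i, k i ≠ 0 := by
    by_contra h
    push_neg at h
    exact hk (funext h)
  have h1 : (1:ℝ) ≤ ((k i : ℝ))^2 := by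
    have : (1:ℤ) ≤ (k i)^2 := by
      rcases lt_or_gt_of_ne hi with h | h <;> nlinarith
    exact_mod_cast this
  have h2 : (1:ℝ) ≤ ∑ j, ((k j : ℝ))^2 := by
    refine le_trans h1 ?_
    exact Finset.single_le_sum (f := fun j => ((k j : ℝ))^2) (fun j _ => sq_nonneg _)
      (Finset.mem_univ i)
  calc (1:ℝ) = Real.sqrt 1 := (Real.sqrt_one).symm
    _ ≤ freqNorm k := Real.sqrt_le_sqrt h2

lemma freqNorm_pos {k : Fin 2 → ℤ} (hk : k ≠ 0) : 0 < freqNorm k :=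
  lt_of_lt_of_le one_pos (one_le_freqNorm hk)

/-- helper: `x^a ≤ y^b` when `1 ≤ x ≤ y`, `a ≤ b`, `0 ≤ b`. -/
lemma rpow_le_mixed {x y a b : ℝ} (hx : 1 ≤ x) (hxy : x ≤ y) (hab : a ≤ b) (hb : 0 ≤ b) :
    x ^ a ≤ y ^ b := by
  have hy : 1 ≤ y := le_trans hx hxy
  rcases le_or_gt a 0 with ha | ha
  · calc x ^ a ≤ 1 := Real.rpow_le_one_of_one_le_of_nonpos hx ha
      _ ≤ y ^ b := Real.one_le_rpow hy hb
  · calc x ^ a ≤ y ^ a := Real.rpow_le_rpow (by linarith) hxy ha.le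
      _ ≤ y ^ b := Real.rpow_le_rpow_of_exponent_le hy hab

lemma claimL {γ s K L M : ℝ} (hγ : 2 < γ) (hs0 : 0 ≤ s) (hsγ : s ≤ γ)
    (hK : 1 ≤ K) (hL : 1 ≤ L) (hM : 1 ≤ M)
    (hKLM : K ≤ L + M) (hMKL : M ≤ K + L) (hLM : L ≤ M) :
    K ^ (s-2) * M ^ (1-s) ≤ 2 ^ γ * L := by
  have hM0 : (0:ℝ) < M := by linarith
  have hK0 : (0:ℝ) < K := by linarith
  have h2γ : (1:ℝ) ≤ 2 ^ γ := Real.one_le_rpow one_le_two (by linarith)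
  rcases le_total 2 s with hs2 | hs2
  · -- s ≥ 2
    have h1 : K ^ (s-2) ≤ (2*M) ^ (s-2) :=
      Real.rpow_le_rpow (by linarith) (by linarith) (by linarith)
    have h2 : (2*M) ^ (s-2) = 2^(s-2) * M^(s-2) := Real.mul_rpow (by norm_num) (by linarith)
    have h3 : M^(s-2) * M^(1-s) = M^(-1 : ℝ) := by
      rw [← Real.rpow_add hM0]; norm_num
    have h4 : M^(-1:ℝ) ≤ 1 := Real.rpow_le_one_of_one_le_of_nonpos hM (by norm_num)
    have h5 : (2:ℝ)^(s-2) ≤ 2^γ := Real.rpow_le_rpow_of_exponent_le one_le_two (by linarith)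
    have hMn : 0 ≤ M ^ (1-s) := Real.rpow_nonneg (by linarith) _
    calc K^(s-2) * M^(1-s) ≤ (2*M)^(s-2) * M^(1-s) := mul_le_mul_of_nonneg_right h1 hMn
      _ = 2^(s-2) * (M^(s-2) * M^(1-s)) := by rw [h2]; ring
      _ = 2^(s-2) * M^(-1:ℝ) := by rw [h3]
      _ ≤ 2^γ * 1 := by
          apply mul_le_mul h5 h4 (Real.rpow_nonneg (by linarith) _) (by linarith)
      _ ≤ 2^γ * L := by nlinarith
  · rcases le_total 1 s with hs1 | hs1
    · -- 1 ≤ s ≤ 2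
      have h1 : K ^ (s-2) ≤ 1 := Real.rpow_le_one_of_one_le_of_nonpos hK (by linarith)
      have h2 : M ^ (1-s) ≤ 1 := Real.rpow_le_one_of_one_le_of_nonpos hM (by linarith)
      calc K^(s-2) * M^(1-s) ≤ 1 * 1 := by
            apply mul_le_mul h1 h2 (Real.rpow_nonneg (by linarith) _) zero_le_one
        _ ≤ 2^γ * L := by nlinarith
    · -- 0 ≤ s ≤ 1
      have hL0 : (0:ℝ) < L := by linarith
      have hM2KL : M ≤ 2*(K*L) := by nlinarith
      have h1 : M ^ (1-s) ≤ (2*(K*L)) ^ (1-s) :=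
        Real.rpow_le_rpow (by linarith) hM2KL (by linarith)
      have h2 : (2*(K*L))^(1-s) = 2^(1-s) * (K^(1-s) * L^(1-s)) := by
        rw [Real.mul_rpow (by norm_num) (by positivity), Real.mul_rpow (by linarith) (by linarith)]
      have h3 : (2:ℝ)^(1-s) ≤ 2 := by
        calc (2:ℝ)^(1-s) ≤ 2^(1:ℝ) := Real.rpow_le_rpow_of_exponent_le one_le_two (by linarith)
          _ = 2 := Real.rpow_one 2
      have h4 : K^(1-s) * K^(s-2) = K^(-1:ℝ) := by rw [← Real.rpow_add hK0]; norm_num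
      have h5 : L^(1-s) ≤ L := by
        calc L^(1-s) ≤ L^(1:ℝ) := Real.rpow_le_rpow_of_exponent_le hL (by linarith)
          _ = L := Real.rpow_one L
      have hKn : 0 ≤ K ^ (s-2) := Real.rpow_nonneg (by linarith) _
      have hK1 : K^(-1:ℝ) ≤ 1 := Real.rpow_le_one_of_one_le_of_nonpos hK (by norm_num)
      calc K^(s-2) * M^(1-s) ≤ K^(s-2) * (2*(K*L))^(1-s) :=
            mul_le_mul_of_nonneg_left h1 hKn
        _ = K^(s-2) * (2^(1-s) * (K^(1-s) * L^(1-s))) := by rw [h2]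
        _ = 2^(1-s) * (K^(1-s) * K^(s-2)) * L^(1-s) := by ring
        _ = 2^(1-s) * K^(-1:ℝ) * L^(1-s) := by rw [h4]
        _ ≤ 2 * 1 * L := by
            apply mul_le_mul (mul_le_mul h3 hK1 (Real.rpow_nonneg (by linarith) _) (by norm_num))
              h5 (Real.rpow_nonneg (by linarith) _) (by norm_num)
        _ ≤ 2^γ * L := by
            have : (2:ℝ) ≤ 2^γ := by
              calc (2:ℝ) = 2^(1:ℝ) := (Real.rpow_one 2).symm
                _ ≤ 2^γ := Real.rpow_le_rpow_of_exponent_le one_le_two (by linarith)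
            nlinarith
  
lemma claimH {γ s K L M : ℝ} (hγ : 2 < γ) (hs0 : 0 ≤ s) (hsγ : s ≤ γ)
    (hK : 1 ≤ K) (hL : 1 ≤ L) (hM : 1 ≤ M)
    (hKLM : K ≤ L + M) (hML : M ≤ L) :
    K ^ (s-2) * M ^ (1 + γ/2 - s) ≤ 2 ^ γ * L ^ γ := by
  have hL0 : (0:ℝ) < L := by linarith
  set t : ℝ := max (s-2) 0 with ht
  set r : ℝ := max (1 + γ/2 - s) 0 with hr
  have htr : t + r ≤ γ := by
    rcases le_total (s-2) 0 with h1 | h1 <;> rcases le_total (1+γ/2-s) 0 with h2 | h2 <;>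
      simp only [ht, hr, max_eq_left h1, max_eq_right h1, max_eq_left h2, max_eq_right h2,
        sup_eq_left.mpr h1, sup_eq_right.mpr h1, sup_eq_left.mpr h2, sup_eq_right.mpr h2] <;>
      linarith
  have h1 : K ^ (s-2) ≤ (2*L) ^ t :=
    rpow_le_mixed hK (by linarith) (le_max_left _ _) (le_max_right _ _)
  have h2 : M ^ (1 + γ/2 - s) ≤ L ^ r :=
    rpow_le_mixed hM hML (le_max_left _ _) (le_max_right _ _)
  have h3 : (2*L)^t = 2^t * L^t := Real.mul_rpow (by norm_num) (by linarith)
  have h4 : (2:ℝ)^t ≤ 2^γ := by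
    apply Real.rpow_le_rpow_of_exponent_le one_le_two
    have : r ≥ 0 := le_max_right _ _
    linarith
  have h5 : L^t * L^r = L^(t+r) := (Real.rpow_add hL0 _ _).symm
  have h6 : L^(t+r) ≤ L^γ := Real.rpow_le_rpow_of_exponent_le hL htr
  calc K ^ (s-2) * M ^ (1 + γ/2 - s) ≤ (2*L)^t * L^r := by
        apply mul_le_mul h1 h2 (Real.rpow_nonneg (by linarith) _) (by positivity)
    _ = 2^t * (L^t * L^r) := by rw [h3]; ring
    _ = 2^t * L^(t+r) := by rw [h5]
    _ ≤ 2^γ * L^γ := by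
        apply mul_le_mul h4 h6 (Real.rpow_nonneg (by linarith) _) (by positivity)

end Stmt8Aux

namespace Stmt8Aux

lemma termwise {γ s : ℝ} (hγ : 2 < γ) (hs0 : 0 ≤ s) (hsγ : s ≤ γ)
    {K L M c d : ℝ} (hK : 1 ≤ K) (hL : 1 ≤ L) (hM : 1 ≤ M) (hc : 0 ≤ c) (hd : 0 ≤ d)
    (hKLM : K ≤ L + M) (hMKL : M ≤ K + L) :
    K^(s-2) * (L^(2:ℝ) * c * (M * d)) ≤
      2^γ * ((L^(3:ℝ)*d) * (M^s*c) + (L^(γ+2)*d) * (M^(s-γ/2)*c)) := by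
  have hL0 : (0:ℝ) < L := by linarith
  have hM0 : (0:ℝ) < M := by linarith
  have hK0 : (0:ℝ) < K := by linarith
  have h2γ0 : (0:ℝ) < 2^γ := Real.rpow_pos_of_pos two_pos γ
  rcases le_total L M with hLM | hML
  · have h := claimL hγ hs0 hsγ hK hL hM hKLM hMKL hLM
    have hMM : M = M^(1-s) * M^s := by
      rw [← Real.rpow_add hM0]; norm_num
    have e1 : K^(s-2) * (L^(2:ℝ) * c * (M * d)) =
        (K^(s-2) * M^(1-s)) * (L^(2:ℝ) * (M^s * (c*d))) := by
      calc K^(s-2) * (L^(2:ℝ) * c * (M * d))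
          = K^(s-2) * (L^(2:ℝ) * c * ((M^(1-s) * M^s) * d)) := by rw [← hMM]
        _ = (K^(s-2) * M^(1-s)) * (L^(2:ℝ) * (M^s * (c*d))) := by ring
    have hLL : L * L^(2:ℝ) = L^(3:ℝ) := by
      rw [show (3:ℝ) = 1 + 2 by norm_num, Real.rpow_add hL0, Real.rpow_one]
    have e2 : (2^γ * L) * (L^(2:ℝ) * (M^s * (c*d))) = 2^γ * ((L^(3:ℝ)*d) * (M^s*c)) := by
      calc (2^γ * L) * (L^(2:ℝ) * (M^s * (c*d)))
          = 2^γ * ((L * L^(2:ℝ)) * (M^s * (c*d))) := by ring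
        _ = 2^γ * ((L^(3:ℝ)*d) * (M^s*c)) := by rw [hLL]; ring
    have hpos : (0:ℝ) ≤ 2^γ * ((L^(γ+2)*d) * (M^(s-γ/2)*c)) := by positivity
    calc K^(s-2) * (L^(2:ℝ) * c * (M * d))
        = (K^(s-2) * M^(1-s)) * (L^(2:ℝ) * (M^s * (c*d))) := e1
      _ ≤ (2^γ * L) * (L^(2:ℝ) * (M^s * (c*d))) := by
          apply mul_le_mul_of_nonneg_right h; positivity
      _ = 2^γ * ((L^(3:ℝ)*d) * (M^s*c)) := e2
      _ ≤ _ := by linarith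
  · have h := claimH hγ hs0 hsγ hK hL hM hKLM hML
    have hMM : M = M^(1+γ/2-s) * M^(s-γ/2) := by
      rw [← Real.rpow_add hM0]; norm_num
    have e1 : K^(s-2) * (L^(2:ℝ) * c * (M * d)) =
        (K^(s-2) * M^(1+γ/2-s)) * (L^(2:ℝ) * (M^(s-γ/2) * (c*d))) := by
      calc K^(s-2) * (L^(2:ℝ) * c * (M * d))
          = K^(s-2) * (L^(2:ℝ) * c * ((M^(1+γ/2-s) * M^(s-γ/2)) * d)) := by rw [← hMM]
        _ = (K^(s-2) * M^(1+γ/2-s)) * (L^(2:ℝ) * (M^(s-γ/2) * (c*d))) := by ring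
    have hLL : L^γ * L^(2:ℝ) = L^(γ+2) := by
      rw [Real.rpow_add hL0]
    have e2 : (2^γ * L^γ) * (L^(2:ℝ) * (M^(s-γ/2) * (c*d))) =
        2^γ * ((L^(γ+2)*d) * (M^(s-γ/2)*c)) := by
      calc (2^γ * L^γ) * (L^(2:ℝ) * (M^(s-γ/2) * (c*d)))
          = 2^γ * ((L^γ * L^(2:ℝ)) * (M^(s-γ/2) * (c*d))) := by ring
        _ = 2^γ * ((L^(γ+2)*d) * (M^(s-γ/2)*c)) := by rw [hLL]; ring
    have hpos : (0:ℝ) ≤ 2^γ * ((L^(3:ℝ)*d) * (M^s*c)) := by positivity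
    calc K^(s-2) * (L^(2:ℝ) * c * (M * d))
        = (K^(s-2) * M^(1+γ/2-s)) * (L^(2:ℝ) * (M^(s-γ/2) * (c*d))) := e1
      _ ≤ (2^γ * L^γ) * (L^(2:ℝ) * (M^(s-γ/2) * (c*d))) := by
          apply mul_le_mul_of_nonneg_right h; positivity
      _ = 2^γ * ((L^(γ+2)*d) * (M^(s-γ/2)*c)) := e2
      _ ≤ _ := by linarith

lemma sum_mul_le_sqrt_mul_sqrt {α : Type*} (T : Finset α) (x y : α → ℝ) :
    ∑ i ∈ T, x i * y i ≤ Real.sqrt (∑ i ∈ T, x i ^ 2) * Real.sqrt (∑ i ∈ T, y i ^ 2) := by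
  calc ∑ i ∈ T, x i * y i ≤ |∑ i ∈ T, x i * y i| := le_abs_self _
    _ = Real.sqrt ((∑ i ∈ T, x i * y i)^2) := (Real.sqrt_sq_eq_abs _).symm
    _ ≤ Real.sqrt ((∑ i ∈ T, x i^2) * ∑ i ∈ T, y i^2) :=
        Real.sqrt_le_sqrt (Finset.sum_mul_sq_le_sq_mul_sq T x y)
    _ = _ := Real.sqrt_mul (Finset.sum_nonneg fun i _ => sq_nonneg _) _

lemma csj (v : Fin 2 → ℤ) (z : Fin 2 → ℂ) :
    ‖∑ j, (v j : ℂ) * z j‖ ≤ freqNorm v * Real.sqrt (∑ j, ‖z j‖^2) := by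
  calc ‖∑ j, (v j:ℂ) * z j‖ ≤ ∑ j, ‖(v j:ℂ) * z j‖ := norm_sum_le _ _
    _ = ∑ j, |(v j : ℝ)| * ‖z j‖ := by
        apply Finset.sum_congr rfl; intro j _
        rw [norm_mul, Complex.norm_intCast]
    _ ≤ Real.sqrt (∑ j, |(v j:ℝ)|^2) * Real.sqrt (∑ j, ‖z j‖^2) :=
        sum_mul_le_sqrt_mul_sqrt _ _ _
    _ = freqNorm v * Real.sqrt (∑ j, ‖z j‖^2) := by
        have h : (∑ j, |(v j:ℝ)|^2) = ∑ j, ((v j:ℝ))^2 :=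
          Finset.sum_congr rfl (fun j _ => sq_abs _)
        rw [h, freqNorm]

lemma sqrt_key {α : Type*} (S : Finset α) (G : α → ℝ) :
    Real.sqrt (∑ k ∈ S, (G k)^2) =
      ‖(WithLp.equiv 2 (↥S → ℝ)).symm (fun k : ↥S => G k.1)‖ := by
  rw [EuclideanSpace.norm_eq]
  rw [← Finset.sum_coe_sort S (fun k => (G k)^2)]
  congr 1
  apply Finset.sum_congr rfl
  intro k _
  rw [Real.norm_eq_abs, sq_abs]
  rfl

lemma minkowski_two {α : Type*} (S : Finset α) (x y : α → ℝ) :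
    Real.sqrt (∑ k ∈ S, (x k + y k)^2) ≤
      Real.sqrt (∑ k ∈ S, (x k)^2) + Real.sqrt (∑ k ∈ S, (y k)^2) := by
  rw [sqrt_key S (fun k => x k + y k), sqrt_key S x, sqrt_key S y]
  have h : (WithLp.equiv 2 (↥S → ℝ)).symm (fun k : ↥S => x k.1 + y k.1) =
      (WithLp.equiv 2 (↥S → ℝ)).symm (fun k : ↥S => x k.1) +
      (WithLp.equiv 2 (↥S → ℝ)).symm (fun k : ↥S => y k.1) := rfl
  rw [h]
  exact norm_add_le _ _

lemma minkowski_sum {α β : Type*} (S : Finset α) (T : Finset β) (F : β → α → ℝ) :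
    Real.sqrt (∑ k ∈ S, (∑ ℓ ∈ T, F ℓ k)^2) ≤
      ∑ ℓ ∈ T, Real.sqrt (∑ k ∈ S, (F ℓ k)^2) := by
  rw [sqrt_key S (fun k => ∑ ℓ ∈ T, F ℓ k)]
  have h : (WithLp.equiv 2 (↥S → ℝ)).symm (fun k : ↥S => ∑ ℓ ∈ T, F ℓ k.1) =
      ∑ ℓ ∈ T, (WithLp.equiv 2 (↥S → ℝ)).symm (fun k : ↥S => F ℓ k.1) := by
    ext k
    rw [WithLp.ofLp_sum]
    exact (Finset.sum_apply k T (fun ℓ => fun k : ↥S => F ℓ k.1)).symm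
  rw [h]
  refine le_trans (norm_sum_le _ _) (le_of_eq ?_)
  exact Finset.sum_congr rfl (fun ℓ _ => (sqrt_key S (F ℓ)).symm)

lemma sum_comp_le {α : Type*} [DecidableEq α] (S : Finset α) (e : α → (Fin 2 → ℤ))
    (he : ∀ a ∈ S, ∀ b ∈ S, e a = e b → a = b)
    (h : (Fin 2 → ℤ) → ℝ) (hnn : ∀ m, 0 ≤ h m) {F : Finset (Fin 2 → ℤ)}
    (h0 : ∀ m ∉ F, h m = 0) :
    ∑ k ∈ S, h (e k) ≤ ∑ m ∈ F, h m := by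
  classical
  have e1 : ∑ k ∈ S.filter (fun k => e k ∈ F), h (e k) = ∑ k ∈ S, h (e k) :=
    Finset.sum_filter_of_ne (fun k _ hne => by
      by_contra hm; exact hne (h0 _ hm))
  rw [← e1]
  have e2 : ∑ k ∈ S.filter (fun k => e k ∈ F), h (e k)
      = ∑ m ∈ (S.filter (fun k => e k ∈ F)).image e, h m :=
    (Finset.sum_image (fun a ha b hb hab =>
      he a (Finset.mem_filter.mp ha).1 b (Finset.mem_filter.mp hb).1 hab)).symm
  rw [e2]
  apply Finset.sum_le_sum_of_subset_of_nonneg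
  · intro m hm
    obtain ⟨k, hk, rfl⟩ := Finset.mem_image.mp hm
    exact (Finset.mem_filter.mp hk).2
  · intro m _ _
    exact hnn m

lemma conv_swap {Uh qh : (Fin 2 → ℤ) → ℝ} (hU0 : ∀ x, 0 ≤ Uh x) (hq0 : ∀ x, 0 ≤ qh x)
    {A F : Finset (Fin 2 → ℤ)} (hqF : ∀ m ∉ F, qh m = 0) (k : Fin 2 → ℤ) :
    ∑ ℓ ∈ A, Uh ℓ * qh (k - ℓ) ≤ ∑ m ∈ F, qh m * Uh (k - m) := by
  classical
  have e1 : ∑ ℓ ∈ A.filter (fun ℓ => k - ℓ ∈ F), Uh ℓ * qh (k - ℓ)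
      = ∑ ℓ ∈ A, Uh ℓ * qh (k-ℓ) :=
    Finset.sum_filter_of_ne (fun ℓ _ hne => by
      by_contra hm; rw [hqF _ hm, mul_zero] at hne; exact hne rfl)
  rw [← e1]
  have e2 : ∑ ℓ ∈ A.filter (fun ℓ => k - ℓ ∈ F), Uh ℓ * qh (k - ℓ)
      = ∑ m ∈ (A.filter (fun ℓ => k - ℓ ∈ F)).image (fun ℓ => k - ℓ), qh m * Uh (k - m) := by
    rw [Finset.sum_image (fun a _ b _ hab => by
      have := congrArg (fun x => k - x) hab
      simpa using this)]
    apply Finset.sum_congr rfl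
    intro ℓ _
    rw [sub_sub_cancel]
    ring
  rw [e2]
  apply Finset.sum_le_sum_of_subset_of_nonneg
  · intro m hm
    obtain ⟨ℓ, hℓ, rfl⟩ := Finset.mem_image.mp hm
    exact (Finset.mem_filter.mp hℓ).2
  · intro m _ _
    exact mul_nonneg (hq0 m) (hU0 _)

end Stmt8Aux

namespace Stmt8Aux

lemma hN2 (p : ℝ) (ℓ : Fin 2 → ℤ) :
    freqNorm ℓ ^ (-p) = (((ℓ 0:ℝ))^2 + ((ℓ 1:ℝ))^2) ^ (-(p/2)) := by
  have h0 : (0:ℝ) ≤ ((ℓ 0:ℝ))^2 + ((ℓ 1:ℝ))^2 := by positivity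
  rw [freqNorm, Fin.sum_univ_two, Real.sqrt_eq_rpow, ← Real.rpow_mul h0]
  congr 1
  ring

lemma abs_sq_rpow (a : ℝ) (p : ℝ) : (a^2) ^ (-(p/2)) = |a| ^ (-p) := by
  rw [← sq_abs, ← Real.rpow_natCast |a| 2, ← Real.rpow_mul (abs_nonneg a)]
  congr 1
  push_cast
  ring

lemma lattice_bound (p : ℝ) (hp : 2 < p) :
    ∃ S : ℝ, 0 < S ∧ ∀ T : Finset (Fin 2 → ℤ), (0 : Fin 2 → ℤ) ∉ T →
      ∑ ℓ ∈ T, freqNorm ℓ ^ (-p) ≤ S := by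
  have hsum1 : Summable (fun n : ℤ => |(n:ℝ)| ^ (-p)) :=
    Real.summable_abs_int_rpow (by linarith)
  have hsum2 : Summable (fun n : ℤ => |(n:ℝ)| ^ (-(p/2))) :=
    Real.summable_abs_int_rpow (by linarith)
  have hnn1 : ∀ n : ℤ, 0 ≤ |(n:ℝ)|^(-p) := fun n => Real.rpow_nonneg (abs_nonneg _) _
  have hnn2 : ∀ n : ℤ, 0 ≤ |(n:ℝ)|^(-(p/2)) := fun n => Real.rpow_nonneg (abs_nonneg _) _
  have ht1 : 0 ≤ ∑' n : ℤ, |(n:ℝ)|^(-p) := tsum_nonneg hnn1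
  have ht2 : 0 ≤ ∑' n : ℤ, |(n:ℝ)|^(-(p/2)) := tsum_nonneg hnn2
  refine ⟨2 * (∑' n : ℤ, |(n:ℝ)|^(-p)) + (∑' n : ℤ, |(n:ℝ)|^(-(p/2)))^2 + 1, by nlinarith, ?_⟩
  intro T hT
  classical
  set ψ1 : ℤ → ℝ := fun n => |(n:ℝ)|^(-p) with hψ1
  set ψ2 : ℤ → ℝ := fun n => |(n:ℝ)|^(-(p/2)) with hψ2
  set T0 := T.filter (fun ℓ => ℓ 0 = 0) with hT0def
  set Tr := T.filter (fun ℓ => ¬ ℓ 0 = 0) with hTrdef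
  set T1 := Tr.filter (fun ℓ => ℓ 1 = 0) with hT1def
  set T2 := Tr.filter (fun ℓ => ¬ ℓ 1 = 0) with hT2def
  have hsplit : ∑ ℓ ∈ T, freqNorm ℓ ^(-p)
      = ∑ ℓ ∈ T0, freqNorm ℓ ^(-p)
        + (∑ ℓ ∈ T1, freqNorm ℓ ^(-p) + ∑ ℓ ∈ T2, freqNorm ℓ ^(-p)) := by
    rw [← Finset.sum_filter_add_sum_filter_not T (fun ℓ => ℓ 0 = 0)
      (fun ℓ => freqNorm ℓ ^(-p))]
    rw [← Finset.sum_filter_add_sum_filter_not Tr (fun ℓ => ℓ 1 = 0)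
      (fun ℓ => freqNorm ℓ ^(-p))]
  have hB0 : ∑ ℓ ∈ T0, freqNorm ℓ ^ (-p) ≤ ∑' n : ℤ, ψ1 n := by
    have he : ∀ ℓ ∈ T0, freqNorm ℓ ^ (-p) = ψ1 (ℓ 1) := by
      intro ℓ hℓ
      obtain ⟨_, hℓ0⟩ := Finset.mem_filter.mp hℓ
      rw [hN2 p ℓ, hℓ0]
      push_cast
      rw [show (0:ℝ)^2 + ((ℓ 1:ℝ))^2 = ((ℓ 1:ℝ))^2 by ring, abs_sq_rpow]
    rw [Finset.sum_congr rfl he]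
    have hinj : ∀ a ∈ T0, ∀ b ∈ T0, a 1 = b 1 → a = b := by
      intro a ha b hb hab
      obtain ⟨_, ha0⟩ := Finset.mem_filter.mp ha
      obtain ⟨_, hb0⟩ := Finset.mem_filter.mp hb
      funext i
      fin_cases i
      · show a 0 = b 0
        rw [ha0, hb0]
      · exact hab
    rw [show (∑ ℓ ∈ T0, ψ1 (ℓ 1)) = ∑ n ∈ T0.image (fun ℓ => ℓ 1), ψ1 n from
      (Finset.sum_image (fun a ha b hb => hinj a ha b hb)).symm]
    exact Summable.sum_le_tsum _ (fun n _ => hnn1 n) hsum1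
  have hB1 : ∑ ℓ ∈ T1, freqNorm ℓ ^ (-p) ≤ ∑' n : ℤ, ψ1 n := by
    have he : ∀ ℓ ∈ T1, freqNorm ℓ ^ (-p) = ψ1 (ℓ 0) := by
      intro ℓ hℓ
      obtain ⟨_, hℓ1⟩ := Finset.mem_filter.mp hℓ
      rw [hN2 p ℓ, hℓ1]
      push_cast
      rw [show ((ℓ 0:ℝ))^2 + (0:ℝ)^2 = ((ℓ 0:ℝ))^2 by ring, abs_sq_rpow]
    rw [Finset.sum_congr rfl he]
    have hinj : ∀ a ∈ T1, ∀ b ∈ T1, a 0 = b 0 → a = b := by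
      intro a ha b hb hab
      obtain ⟨_, ha1⟩ := Finset.mem_filter.mp ha
      obtain ⟨_, hb1⟩ := Finset.mem_filter.mp hb
      funext i
      fin_cases i
      · exact hab
      · show a 1 = b 1
        rw [ha1, hb1]
    rw [show (∑ ℓ ∈ T1, ψ1 (ℓ 0)) = ∑ n ∈ T1.image (fun ℓ => ℓ 0), ψ1 n from
      (Finset.sum_image (fun a ha b hb => hinj a ha b hb)).symm]
    exact Summable.sum_le_tsum _ (fun n _ => hnn1 n) hsum1
  have hB2 : ∑ ℓ ∈ T2, freqNorm ℓ ^ (-p) ≤ (∑' n : ℤ, ψ2 n)^2 := by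
    have hpt : ∀ ℓ ∈ T2, freqNorm ℓ ^ (-p) ≤ ψ2 (ℓ 0) * ψ2 (ℓ 1) := by
      intro ℓ hℓ
      obtain ⟨hℓr, hℓ1⟩ := Finset.mem_filter.mp hℓ
      obtain ⟨_, hℓ0⟩ := Finset.mem_filter.mp hℓr
      have ha : (1:ℝ) ≤ |(ℓ 0:ℝ)| := by
        have : (1:ℤ) ≤ |ℓ 0| := Int.one_le_abs (by simpa using hℓ0)
        calc (1:ℝ) ≤ ((|ℓ 0| : ℤ) : ℝ) := by exact_mod_cast this
          _ = |(ℓ 0:ℝ)| := by push_cast; ring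
      have hb : (1:ℝ) ≤ |(ℓ 1:ℝ)| := by
        have : (1:ℤ) ≤ |ℓ 1| := Int.one_le_abs (by simpa using hℓ1)
        calc (1:ℝ) ≤ ((|ℓ 1| : ℤ) : ℝ) := by exact_mod_cast this
          _ = |(ℓ 1:ℝ)| := by push_cast; ring
      have hprod0 : (0:ℝ) < |(ℓ 0:ℝ)| * |(ℓ 1:ℝ)| := by nlinarith
      have hprod : |(ℓ 0:ℝ)| * |(ℓ 1:ℝ)| ≤ ((ℓ 0:ℝ))^2 + ((ℓ 1:ℝ))^2 := by
        nlinarith [sq_nonneg (|(ℓ 0:ℝ)| - |(ℓ 1:ℝ)|), sq_abs ((ℓ 0:ℝ)), sq_abs ((ℓ 1:ℝ))]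
      rw [hN2 p ℓ]
      calc (((ℓ 0:ℝ))^2 + ((ℓ 1:ℝ))^2) ^ (-(p/2))
          ≤ (|(ℓ 0:ℝ)| * |(ℓ 1:ℝ)|) ^ (-(p/2)) :=
            Real.rpow_le_rpow_of_nonpos hprod0 hprod (by linarith)
        _ = ψ2 (ℓ 0) * ψ2 (ℓ 1) :=
            Real.mul_rpow (abs_nonneg _) (abs_nonneg _)
    have hinj : ∀ a ∈ T2, ∀ b ∈ T2, (a 0, a 1) = (b 0, b 1) → a = b := by
      intro a _ b _ hab
      obtain ⟨h1, h2⟩ := Prod.mk.injEq _ _ _ _ ▸ hab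
      funext i
      fin_cases i
      · exact congrArg Prod.fst hab
      · exact congrArg Prod.snd hab
    calc ∑ ℓ ∈ T2, freqNorm ℓ ^ (-p) ≤ ∑ ℓ ∈ T2, ψ2 (ℓ 0) * ψ2 (ℓ 1) :=
          Finset.sum_le_sum hpt
      _ = ∑ x ∈ T2.image (fun ℓ => (ℓ 0, ℓ 1)), ψ2 x.1 * ψ2 x.2 :=
          (Finset.sum_image (g := fun ℓ : Fin 2 → ℤ => (ℓ 0, ℓ 1)) (f := fun x : ℤ × ℤ => ψ2 x.1 * ψ2 x.2)
            (fun a ha b hb => hinj a ha b hb)).symm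
      _ ≤ ∑ x ∈ (T2.image (fun ℓ => ℓ 0)) ×ˢ (T2.image (fun ℓ => ℓ 1)), ψ2 x.1 * ψ2 x.2 := by
          apply Finset.sum_le_sum_of_subset_of_nonneg
          · intro x hx
            obtain ⟨ℓ, hℓ, rfl⟩ := Finset.mem_image.mp hx
            exact Finset.mem_product.mpr ⟨Finset.mem_image_of_mem _ hℓ,
              Finset.mem_image_of_mem _ hℓ⟩
          · intro x _ _
            exact mul_nonneg (hnn2 _) (hnn2 _)
      _ = (∑ n ∈ T2.image (fun ℓ => ℓ 0), ψ2 n) * (∑ n ∈ T2.image (fun ℓ => ℓ 1), ψ2 n) := by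
          rw [Finset.sum_product]
          rw [Finset.sum_mul_sum]
      _ ≤ (∑' n : ℤ, ψ2 n) * (∑' n : ℤ, ψ2 n) := by
          apply mul_le_mul (Summable.sum_le_tsum _ (fun n _ => hnn2 n) hsum2)
            (Summable.sum_le_tsum _ (fun n _ => hnn2 n) hsum2)
            (Finset.sum_nonneg (fun n _ => hnn2 n)) ht2
      _ = (∑' n : ℤ, ψ2 n)^2 := (sq _).symm
  rw [hsplit]
  linarith

end Stmt8Aux


open Stmt8Aux in
/-- For `γ > 2` and `s ∈ [0,γ]` there is `C = C(γ,s)` with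
`‖Λ^{s−2}((Δu·∇)f)‖_{L²} ≤ C ‖u‖_{H^{γ+2}} ‖f‖_{H^s}` for all mean-zero
`u ∈ H^{γ+2}(𝕋²;ℝ²)` and mean-zero `f ∈ H^s(𝕋²)`. -/
theorem stmt8 (γ s : ℝ) (hγ : 2 < γ) (hs0 : 0 ≤ s) (hsγ : s ≤ γ) :
    ∃ C : ℝ, 0 < C ∧
      ∀ (u : (Fin 2 → ℤ) →₀ (Fin 2 → ℂ)) (f : (Fin 2 → ℤ) →₀ ℂ),
        u 0 = 0 → f 0 = 0 →
        Real.sqrt (∑' k : {k : Fin 2 → ℤ // k ≠ 0}, ‖opCoef' s u f k.val‖ ^ 2) ≤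
          C * hsNormVec (γ + 2) u * hsNorm s f := by
  classical
  obtain ⟨S₁, hS₁0, hS₁⟩ := lattice_bound (2*γ-2) (by linarith)
  obtain ⟨S₂, hS₂0, hS₂⟩ := lattice_bound γ (by linarith)
  have h2γ0 : (0:ℝ) < 2^γ := Real.rpow_pos_of_pos two_pos γ
  refine ⟨2^γ * (Real.sqrt S₁ + Real.sqrt S₂) + 1, by positivity, ?_⟩
  intro u f hu0 hf0
  have hNu0 : 0 ≤ hsNormVec (γ+2) u := Real.sqrt_nonneg _
  have hNf0 : 0 ≤ hsNorm s f := Real.sqrt_nonneg _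
  set Nu := hsNormVec (γ+2) u with hNudef
  set Nf := hsNorm s f with hNfdef
  set X := 2^γ * (Real.sqrt S₁ * Nu * Nf + Real.sqrt S₂ * Nf * Nu) with hXdef
  have hX0 : 0 ≤ X := by positivity
  have h0usupp : (0 : Fin 2 → ℤ) ∉ u.support := by
    simp [Finsupp.mem_support_iff, hu0]
  have h0fsupp : (0 : Fin 2 → ℤ) ∉ f.support := by
    simp [Finsupp.mem_support_iff, hf0]
  have h0u : ∀ ℓ ∈ u.support, ℓ ≠ (0 : Fin 2 → ℤ) := by
    intro ℓ hl h; rw [h] at hl; exact h0usupp hl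
  have h0f : ∀ m ∈ f.support, m ≠ (0 : Fin 2 → ℤ) := by
    intro m hm h; rw [h] at hm; exact h0fsupp hm
  set w : (Fin 2 → ℤ) → ℝ := fun ℓ => Real.sqrt (∑ j, ‖u ℓ j‖^2) with hwdef
  have hw0 : ∀ ℓ, 0 ≤ w ℓ := fun ℓ => Real.sqrt_nonneg _
  have hwsupp : ∀ ℓ ∉ u.support, w ℓ = 0 := by
    intro ℓ hl
    have h := Finsupp.notMem_support_iff.mp hl
    simp [hwdef, h]
  set g : (Fin 2 → ℤ) → ℝ := fun m => freqNorm m ^ s * ‖f m‖ with hgdef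
  set qq : (Fin 2 → ℤ) → ℝ := fun m => freqNorm m ^ (s - γ/2) * ‖f m‖ with hqdef
  set P : (Fin 2 → ℤ) → ℝ := fun ℓ => freqNorm ℓ ^ (3:ℝ) * w ℓ with hPdef
  set Uf : (Fin 2 → ℤ) → ℝ := fun ℓ => freqNorm ℓ ^ (γ+2) * w ℓ with hUdef
  have hg0 : ∀ m, 0 ≤ g m := fun m => by
    simp only [hgdef]
    exact mul_nonneg (Real.rpow_nonneg (freqNorm_nonneg m) _) (norm_nonneg _)
  have hq0 : ∀ m, 0 ≤ qq m := fun m => by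
    simp only [hqdef]
    exact mul_nonneg (Real.rpow_nonneg (freqNorm_nonneg m) _) (norm_nonneg _)
  have hP0 : ∀ ℓ, 0 ≤ P ℓ := fun ℓ => by
    simp only [hPdef]
    exact mul_nonneg (Real.rpow_nonneg (freqNorm_nonneg ℓ) _) (hw0 ℓ)
  have hU0 : ∀ ℓ, 0 ≤ Uf ℓ := fun ℓ => by
    simp only [hUdef]
    exact mul_nonneg (Real.rpow_nonneg (freqNorm_nonneg ℓ) _) (hw0 ℓ)
  have hgsupp : ∀ m ∉ f.support, g m = 0 := by
    intro m hm
    have h := Finsupp.notMem_support_iff.mp hm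
    simp [hgdef, h]
  have hqsupp : ∀ m ∉ f.support, qq m = 0 := by
    intro m hm
    have h := Finsupp.notMem_support_iff.mp hm
    simp [hqdef, h]
  have hUsupp : ∀ ℓ ∉ u.support, Uf ℓ = 0 := by
    intro ℓ hl
    simp [hUdef, hwsupp ℓ hl]
  have hsq_rpow : ∀ (x a : ℝ), 0 ≤ x → (x ^ a)^2 = x ^ (2*a) := by
    intro x a hx
    rw [← Real.rpow_natCast (x ^ a) 2, ← Real.rpow_mul hx]
    norm_num
    rw [mul_comm]
  have hgNf : Real.sqrt (∑ m ∈ f.support, (g m)^2) = Nf := by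
    rw [hNfdef, hsNorm]
    congr 1
    apply Finset.sum_congr rfl
    intro m _
    simp only [hgdef]
    rw [mul_pow, hsq_rpow _ s (freqNorm_nonneg m)]
  have hUNu : Real.sqrt (∑ ℓ ∈ u.support, (Uf ℓ)^2) = Nu := by
    rw [hNudef, hsNormVec]
    congr 1
    apply Finset.sum_congr rfl
    intro ℓ _
    simp only [hUdef, hwdef]
    rw [mul_pow, hsq_rpow _ (γ+2) (freqNorm_nonneg ℓ),
      Real.sq_sqrt (Finset.sum_nonneg fun j _ => sq_nonneg _)]
  have hPsum : ∑ ℓ ∈ u.support, P ℓ ≤ Real.sqrt S₁ * Nu := by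
    have hkey : ∀ ℓ ∈ u.support, P ℓ = (freqNorm ℓ ^ (1-γ)) * (freqNorm ℓ ^ (γ+2) * w ℓ) := by
      intro ℓ hl
      have h1 : 0 < freqNorm ℓ := freqNorm_pos (h0u ℓ hl)
      simp only [hPdef]
      rw [← mul_assoc, ← Real.rpow_add h1, show 1 - γ + (γ + 2) = (3:ℝ) by ring]
    rw [Finset.sum_congr rfl hkey]
    refine le_trans (sum_mul_le_sqrt_mul_sqrt _ _ _) ?_
    have e1 : ∑ ℓ ∈ u.support, (freqNorm ℓ ^ (1-γ))^2
        = ∑ ℓ ∈ u.support, freqNorm ℓ ^ (-(2*γ-2)) := by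
      apply Finset.sum_congr rfl
      intro ℓ _
      rw [hsq_rpow _ (1-γ) (freqNorm_nonneg ℓ)]
      congr 1
      ring
    have e2 : ∑ ℓ ∈ u.support, (freqNorm ℓ ^ (γ+2) * w ℓ)^2 = ∑ ℓ ∈ u.support, (Uf ℓ)^2 := by
      apply Finset.sum_congr rfl
      intro ℓ _
      simp only [hUdef]
    rw [e1, e2]
    exact mul_le_mul (Real.sqrt_le_sqrt (hS₁ _ h0usupp)) (le_of_eq hUNu)
      (Real.sqrt_nonneg _) (Real.sqrt_nonneg _)
  have hqsum : ∑ m ∈ f.support, qq m ≤ Real.sqrt S₂ * Nf := by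
    have hkey : ∀ m ∈ f.support, qq m = (freqNorm m ^ (-(γ/2))) * (freqNorm m ^ s * ‖f m‖) := by
      intro m hm
      have h1 : 0 < freqNorm m := freqNorm_pos (h0f m hm)
      simp only [hqdef]
      rw [show s - γ/2 = -(γ/2) + s by ring, Real.rpow_add h1, mul_assoc]
    rw [Finset.sum_congr rfl hkey]
    refine le_trans (sum_mul_le_sqrt_mul_sqrt _ _ _) ?_
    have e1 : ∑ m ∈ f.support, (freqNorm m ^ (-(γ/2)))^2
        = ∑ m ∈ f.support, freqNorm m ^ (-γ) := by
      apply Finset.sum_congr rfl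
      intro m _
      rw [hsq_rpow _ (-(γ/2)) (freqNorm_nonneg m)]
      congr 1
      ring
    have e2 : ∑ m ∈ f.support, (freqNorm m ^ s * ‖f m‖)^2 = ∑ m ∈ f.support, (g m)^2 := by
      apply Finset.sum_congr rfl
      intro m _
      simp only [hgdef]
    rw [e1, e2]
    exact mul_le_mul (Real.sqrt_le_sqrt (hS₂ _ h0fsupp)) (le_of_eq hgNf)
      (Real.sqrt_nonneg _) (Real.sqrt_nonneg _)
  -- pointwise bound
  set b1 : {k : Fin 2 → ℤ // k ≠ 0} → ℝ :=
    fun k => ∑ ℓ ∈ u.support, P ℓ * g (k.1 - ℓ) with hb1def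
  set b2 : {k : Fin 2 → ℤ // k ≠ 0} → ℝ :=
    fun k => ∑ m ∈ f.support, qq m * Uf (k.1 - m) with hb2def
  have hb10 : ∀ k, 0 ≤ b1 k := fun k => by
    simp only [hb1def]
    exact Finset.sum_nonneg fun ℓ _ => mul_nonneg (hP0 ℓ) (hg0 _)
  have hb20 : ∀ k, 0 ≤ b2 k := fun k => by
    simp only [hb2def]
    exact Finset.sum_nonneg fun m _ => mul_nonneg (hq0 m) (hU0 _)
  have hpt : ∀ k : {k : Fin 2 → ℤ // k ≠ 0},
      ‖opCoef' s u f k.1‖ ≤ 2^γ * (b1 k + b2 k) := by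
    intro k
    have hK1 : 1 ≤ freqNorm k.1 := one_le_freqNorm k.2
    have hKnn : 0 ≤ freqNorm k.1 ^ (s-2) := Real.rpow_nonneg (freqNorm_nonneg _) _
    have hA : ‖opCoef' s u f k.1‖ ≤
        ∑ ℓ ∈ u.support, freqNorm k.1^(s-2) *
          (freqNorm ℓ^(2:ℝ) * ‖f (k.1-ℓ)‖ * (freqNorm (k.1-ℓ) * w ℓ)) := by
      simp only [opCoef']
      rw [norm_mul, norm_mul, Complex.norm_I, one_mul, Complex.norm_real, Real.norm_eq_abs,
        abs_of_nonneg hKnn]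
      refine le_trans (mul_le_mul_of_nonneg_left (norm_sum_le _ _) hKnn) ?_
      rw [Finset.mul_sum]
      apply Finset.sum_le_sum
      intro ℓ hl
      apply mul_le_mul_of_nonneg_left ?_ hKnn
      rw [norm_mul, norm_mul, Complex.norm_real, Real.norm_eq_abs,
        abs_of_nonneg (Real.rpow_nonneg (freqNorm_nonneg ℓ) _)]
      apply mul_le_mul_of_nonneg_left ?_
        (mul_nonneg (Real.rpow_nonneg (freqNorm_nonneg ℓ) _) (norm_nonneg _))
      have hveq : (fun j => ((k.1 j - ℓ j : ℤ) : ℂ) * u ℓ j)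
          = (fun j => (((k.1 - ℓ) j : ℤ) : ℂ) * u ℓ j) := by
        funext j
        rw [Pi.sub_apply]
      calc ‖∑ j, ((k.1 j - ℓ j : ℤ) : ℂ) * u ℓ j‖
          = ‖∑ j, (((k.1 - ℓ) j : ℤ) : ℂ) * u ℓ j‖ := by rw [hveq]
        _ ≤ freqNorm (k.1-ℓ) * Real.sqrt (∑ j, ‖u ℓ j‖^2) := csj (k.1-ℓ) (u ℓ)
        _ = freqNorm (k.1-ℓ) * w ℓ := by rw [hwdef]
    have hB : ∀ ℓ ∈ u.support, freqNorm k.1^(s-2) *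
          (freqNorm ℓ^(2:ℝ) * ‖f (k.1-ℓ)‖ * (freqNorm (k.1-ℓ) * w ℓ)) ≤
        2^γ * (P ℓ * g (k.1-ℓ) + Uf ℓ * qq (k.1-ℓ)) := by
      intro ℓ hl
      by_cases hfm : f (k.1 - ℓ) = 0
      · simp [hgdef, hqdef, hfm]
      · have hm : k.1 - ℓ ∈ f.support := Finsupp.mem_support_iff.mpr hfm
        have hm0 : k.1 - ℓ ≠ 0 := h0f _ hm
        have hL1 : 1 ≤ freqNorm ℓ := one_le_freqNorm (h0u ℓ hl)
        have hM1 : 1 ≤ freqNorm (k.1-ℓ) := one_le_freqNorm hm0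
        have hKLM : freqNorm k.1 ≤ freqNorm ℓ + freqNorm (k.1-ℓ) := by
          have h := freqNorm_add_le ℓ (k.1 - ℓ)
          simpa using h
        have hMKL : freqNorm (k.1-ℓ) ≤ freqNorm k.1 + freqNorm ℓ := by
          have h := freqNorm_add_le k.1 (-ℓ)
          rw [freqNorm_neg] at h
          simpa [sub_eq_add_neg] using h
        have ht := termwise hγ hs0 hsγ hK1 hL1 hM1 (norm_nonneg (f (k.1-ℓ))) (hw0 ℓ) hKLM hMKL
        simp only [hPdef, hUdef, hgdef, hqdef]
        exact ht
    have hC : ∑ ℓ ∈ u.support, Uf ℓ * qq (k.1-ℓ) ≤ ∑ m ∈ f.support, qq m * Uf (k.1-m) :=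
      conv_swap hU0 hq0 hqsupp k.1
    calc ‖opCoef' s u f k.1‖
        ≤ ∑ ℓ ∈ u.support, freqNorm k.1^(s-2) *
          (freqNorm ℓ^(2:ℝ) * ‖f (k.1-ℓ)‖ * (freqNorm (k.1-ℓ) * w ℓ)) := hA
      _ ≤ ∑ ℓ ∈ u.support, 2^γ * (P ℓ * g (k.1-ℓ) + Uf ℓ * qq (k.1-ℓ)) :=
          Finset.sum_le_sum hB
      _ = 2^γ * (∑ ℓ ∈ u.support, P ℓ * g (k.1-ℓ) + ∑ ℓ ∈ u.support, Uf ℓ * qq (k.1-ℓ)) := by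
          rw [← Finset.mul_sum, Finset.sum_add_distrib]
      _ ≤ 2^γ * (b1 k + b2 k) := by
          apply mul_le_mul_of_nonneg_left ?_ h2γ0.le
          simp only [hb1def, hb2def]
          exact add_le_add_right hC _
  -- finset key bound
  have key : ∀ Sf : Finset {k : Fin 2 → ℤ // k ≠ 0},
      ∑ k ∈ Sf, ‖opCoef' s u f k.1‖^2 ≤ X^2 := by
    intro Sf
    have hsqle : Real.sqrt (∑ k ∈ Sf, ‖opCoef' s u f k.1‖^2) ≤ X := by
      have step1 : Real.sqrt (∑ k ∈ Sf, ‖opCoef' s u f k.1‖^2)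
          ≤ Real.sqrt (∑ k ∈ Sf, (2^γ * (b1 k + b2 k))^2) := by
        apply Real.sqrt_le_sqrt
        apply Finset.sum_le_sum
        intro k _
        exact pow_le_pow_left₀ (norm_nonneg _) (hpt k) 2
      have hfact : ∑ k ∈ Sf, (2^γ * (b1 k + b2 k))^2
          = (2^γ)^2 * ∑ k ∈ Sf, (b1 k + b2 k)^2 := by
        rw [Finset.mul_sum]
        apply Finset.sum_congr rfl
        intro k _
        ring
      have step2 : Real.sqrt (∑ k ∈ Sf, (2^γ * (b1 k + b2 k))^2)
          = 2^γ * Real.sqrt (∑ k ∈ Sf, (b1 k + b2 k)^2) := by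
        rw [hfact, Real.sqrt_mul (sq_nonneg _), Real.sqrt_sq h2γ0.le]
      have hrow1 : ∀ ℓ ∈ u.support,
          Real.sqrt (∑ k ∈ Sf, (P ℓ * g (k.1-ℓ))^2) ≤ P ℓ * Nf := by
        intro ℓ _
        have h1 : ∑ k ∈ Sf, (P ℓ * g (k.1-ℓ))^2 = (P ℓ)^2 * ∑ k ∈ Sf, (g (k.1-ℓ))^2 := by
          rw [Finset.mul_sum]
          exact Finset.sum_congr rfl (fun k _ => by ring)
        rw [h1, Real.sqrt_mul (sq_nonneg _), Real.sqrt_sq (hP0 ℓ)]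
        apply mul_le_mul_of_nonneg_left ?_ (hP0 ℓ)
        rw [← hgNf]
        apply Real.sqrt_le_sqrt
        apply sum_comp_le Sf (fun k => k.1 - ℓ) ?_ (fun m => (g m)^2)
          (fun m => sq_nonneg _) ?_
        · intro a _ b _ hab
          apply Subtype.ext
          have h := congrArg (fun x => x + ℓ) hab
          simpa using h
        · intro m hm
          show g m ^ 2 = 0
          rw [hgsupp m hm]
          norm_num
      have hrow2 : ∀ m ∈ f.support,
          Real.sqrt (∑ k ∈ Sf, (qq m * Uf (k.1-m))^2) ≤ qq m * Nu := by
        intro m _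
        have h1 : ∑ k ∈ Sf, (qq m * Uf (k.1-m))^2 = (qq m)^2 * ∑ k ∈ Sf, (Uf (k.1-m))^2 := by
          rw [Finset.mul_sum]
          exact Finset.sum_congr rfl (fun k _ => by ring)
        rw [h1, Real.sqrt_mul (sq_nonneg _), Real.sqrt_sq (hq0 m)]
        apply mul_le_mul_of_nonneg_left ?_ (hq0 m)
        rw [← hUNu]
        apply Real.sqrt_le_sqrt
        apply sum_comp_le Sf (fun k => k.1 - m) ?_ (fun ℓ => (Uf ℓ)^2)
          (fun ℓ => sq_nonneg _) ?_
        · intro a _ b _ hab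
          apply Subtype.ext
          have h := congrArg (fun x => x + m) hab
          simpa using h
        · intro ℓ hl
          show Uf ℓ ^ 2 = 0
          rw [hUsupp ℓ hl]
          norm_num
      have r1 : Real.sqrt (∑ k ∈ Sf, (b1 k)^2) ≤ (∑ ℓ ∈ u.support, P ℓ) * Nf := by
        have h := minkowski_sum Sf u.support (fun ℓ k => P ℓ * g (k.1 - ℓ))
        simp only [hb1def]
        refine le_trans h ?_
        rw [Finset.sum_mul]
        exact Finset.sum_le_sum hrow1
      have r2 : Real.sqrt (∑ k ∈ Sf, (b2 k)^2) ≤ (∑ m ∈ f.support, qq m) * Nu := by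
        have h := minkowski_sum Sf f.support (fun m k => qq m * Uf (k.1 - m))
        simp only [hb2def]
        refine le_trans h ?_
        rw [Finset.sum_mul]
        exact Finset.sum_le_sum hrow2
      calc Real.sqrt (∑ k ∈ Sf, ‖opCoef' s u f k.1‖^2)
          ≤ Real.sqrt (∑ k ∈ Sf, (2^γ * (b1 k + b2 k))^2) := step1
        _ = 2^γ * Real.sqrt (∑ k ∈ Sf, (b1 k + b2 k)^2) := step2
        _ ≤ 2^γ * (Real.sqrt (∑ k ∈ Sf, (b1 k)^2) + Real.sqrt (∑ k ∈ Sf, (b2 k)^2)) :=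
            mul_le_mul_of_nonneg_left (minkowski_two Sf b1 b2) h2γ0.le
        _ ≤ 2^γ * ((∑ ℓ ∈ u.support, P ℓ) * Nf + (∑ m ∈ f.support, qq m) * Nu) :=
            mul_le_mul_of_nonneg_left (add_le_add r1 r2) h2γ0.le
        _ ≤ 2^γ * (Real.sqrt S₁ * Nu * Nf + Real.sqrt S₂ * Nf * Nu) := by
            apply mul_le_mul_of_nonneg_left ?_ h2γ0.le
            exact add_le_add (mul_le_mul_of_nonneg_right hPsum hNf0)
              (mul_le_mul_of_nonneg_right hqsum hNu0)
        _ = X := hXdef.symm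
    have h0 : 0 ≤ ∑ k ∈ Sf, ‖opCoef' s u f k.1‖^2 :=
      Finset.sum_nonneg fun _ _ => sq_nonneg _
    calc ∑ k ∈ Sf, ‖opCoef' s u f k.1‖^2
        = (Real.sqrt (∑ k ∈ Sf, ‖opCoef' s u f k.1‖^2))^2 := (Real.sq_sqrt h0).symm
      _ ≤ X^2 := pow_le_pow_left₀ (Real.sqrt_nonneg _) hsqle 2
  have hts : (∑' k : {k : Fin 2 → ℤ // k ≠ 0}, ‖opCoef' s u f k.1‖^2) ≤ X^2 :=
    tsum_le_of_sum_le' (sq_nonneg X) key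
  calc Real.sqrt (∑' k : {k : Fin 2 → ℤ // k ≠ 0}, ‖opCoef' s u f k.1‖^2)
      ≤ Real.sqrt (X^2) := Real.sqrt_le_sqrt hts
    _ = X := Real.sqrt_sq hX0
    _ ≤ (2^γ * (Real.sqrt S₁ + Real.sqrt S₂) + 1) * Nu * Nf := by
        rw [hXdef]
        have hNN : 0 ≤ Nu * Nf := mul_nonneg hNu0 hNf0
        nlinarith [hNN]
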